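/- arXiv:math/0105147 — 3 statements merged into one kernel-verified Lean document; each statement's English description precedes it below -/
import Mathlib

section
/- If (x(t), y(t)) is a differentiable solution of the Duffing system ẋ = y, ẏ = x − x³, then the transformed variables x₁(t) = x(t)² − y(t)², y₁(t) = 2 x(t) y(t) satisfy the closed system ẋ₁ = (1/2)(x₁ + r) y₁, ẏ₁ = −x₁² − (1/2) y₁² + r(2 − x₁), where r(t) = x(t)² + y(t)² (note r = √(x₁² + y₁²)). -/
/-! The covering map is `z ↦ z²` for `z = x + iy`, so by the chain rule `ẋ₁ = 2(xẋ − yẏ)` and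
`ẏ₁ = 2(ẋy + xẏ)`. Substituting the Duffing field and eliminating `x² = (r + x₁)/2`,
`y² = (r − x₁)/2` makes both right-hand sides polynomials in `x₁, y₁, r`, while
`r = √(x₁² + y₁²)` is `|z|² = |z²|`. -/

section

variable {x y : ℝ → ℝ} {x' y' t : ℝ}

theorem HasDerivAt.sq_sub_sq (hx : HasDerivAt x x' t) (hy : HasDerivAt y y' t) :
    HasDerivAt (fun t => x t ^ 2 - y t ^ 2) (2 * (x t * x' - y t * y')) t :=
  ((hx.pow 2).sub (hy.pow 2)).congr_deriv (by ring)

theorem HasDerivAt.two_mul_mul (hx : HasDerivAt x x' t) (hy : HasDerivAt y y' t) :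
    HasDerivAt (fun t => 2 * x t * y t) (2 * (x' * y t + x t * y')) t :=
  ((hx.const_mul 2).mul hy).congr_deriv (by ring)

end

theorem sq_sub_sq_sq_add_two_mul_mul_sq (a b : ℝ) :
    (a ^ 2 - b ^ 2) ^ 2 + (2 * a * b) ^ 2 = (a ^ 2 + b ^ 2) ^ 2 := by
  ring

/-- If `(x,y)` solves the conservative Duffing system, then `x₁ = x² − y²`,
`y₁ = 2xy` satisfy the closed covered system
`ẋ₁ = (1/2)(x₁ + r) y₁`, `ẏ₁ = −x₁² − (1/2) y₁² + r(2 − x₁)` with `r = x² + y²`. -/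
theorem covered_duffing_system (x y : ℝ → ℝ)
    (hx : ∀ t, HasDerivAt x (y t) t)
    (hy : ∀ t, HasDerivAt y (x t - (x t) ^ 3) t) :
    ∀ t,
      HasDerivAt (fun t => (x t) ^ 2 - (y t) ^ 2)
        ((1 / 2) * (((x t) ^ 2 - (y t) ^ 2) + ((x t) ^ 2 + (y t) ^ 2))
          * (2 * x t * y t)) t ∧
      HasDerivAt (fun t => 2 * x t * y t)
        (-((x t) ^ 2 - (y t) ^ 2) ^ 2 - (1 / 2) * (2 * x t * y t) ^ 2
          + ((x t) ^ 2 + (y t) ^ 2) * (2 - ((x t) ^ 2 - (y t) ^ 2))) t ∧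
      (x t) ^ 2 + (y t) ^ 2
        = Real.sqrt (((x t) ^ 2 - (y t) ^ 2) ^ 2 + (2 * x t * y t) ^ 2) := by
  intro t
  refine ⟨((hx t).sq_sub_sq (hy t)).congr_deriv (by ring),
    ((hx t).two_mul_mul (hy t)).congr_deriv (by ring), ?_⟩
  rw [sq_sub_sq_sq_add_two_mul_mul_sq, Real.sqrt_sq (by positivity)]
end

section
/- Along any solution of the covered Duffing dynamics, with x₁ = x²−y², y₁ = 2xy and θ defined by tan θ = y₁/(x₁ − 1), the derivative of θ with respect to t equals −2(x⁶ + x⁴y² − 2x⁴ + y⁴ + x² + y²)/(x⁴ + 2x²y² + y⁴ − 2x² + 2y² + 1), whenever (x₁, y₁) ≠ (1, 0). -/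
/-!
Differentiating the identity `v cos θ - u sin θ = 0` along a curve `(u, v) = ρ (cos θ, sin θ)`
gives the angular-velocity formula `θ' (u² + v²) = u v' - v u'`, with no differentiability of `ρ`
needed. For `u = x² - y² - 1`, `v = 2xy` the Duffing equations give `u' = 2x³y`,
`v' = 2y² + 2x² - 2x⁴`, and `u v' - v u'` and `u² + v² = ρ² > 0` expand to `-2N` and `D`.
-/

open Filter Real Topology

theorem polar_angle_deriv_mul_sq_add_sq {u v ρ θ : ℝ → ℝ} {u' v' θ' t : ℝ}
    (hu : HasDerivAt u u' t) (hv : HasDerivAt v v' t) (hθ : HasDerivAt θ θ' t)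
    (hpolar : ∀ᶠ s in 𝓝 t, u s = ρ s * cos (θ s) ∧ v s = ρ s * sin (θ s)) :
    θ' * (u t ^ 2 + v t ^ 2) = u t * v' - v t * u' := by
  have hzero : HasDerivAt (fun s => v s * cos (θ s) - u s * sin (θ s)) 0 t :=
    (hasDerivAt_const t (0 : ℝ)).congr_of_eventuallyEq
      (hpolar.mono fun s hs => by simp only [hs.1, hs.2]; ring)
  have hderiv := ((hv.mul hθ.cos).sub (hu.mul hθ.sin)).unique hzero
  obtain ⟨hut, hvt⟩ := hpolar.self_of_nhds
  rw [hut, hvt] at hderiv ⊢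
  linear_combination (-ρ t) * hderiv

/-- Along solutions of the conservative Duffing system, the polar angle θ
around `(1,0)` in the `(x₁,y₁)` plane (with `x₁ = x²−y²`, `y₁ = 2xy`)
has derivative `−2N/D`. -/
theorem theta_derivative (x y ρ θ θ' : ℝ → ℝ)
    (hx : ∀ t, HasDerivAt x (y t) t)
    (hy : ∀ t, HasDerivAt y (x t - (x t) ^ 3) t)
    (hρ : ∀ t, 0 < ρ t)
    (hpolar : ∀ t, ((x t) ^ 2 - (y t) ^ 2 - 1 = ρ t * Real.cos (θ t)) ∧
      (2 * x t * y t = ρ t * Real.sin (θ t)))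
    (hθ : ∀ t, HasDerivAt θ (θ' t) t) :
    ∀ t, θ' t =
      -2 * ((x t) ^ 6 + (x t) ^ 4 * (y t) ^ 2 - 2 * (x t) ^ 4 + (y t) ^ 4
          + (x t) ^ 2 + (y t) ^ 2)
        / ((x t) ^ 4 + 2 * (x t) ^ 2 * (y t) ^ 2 + (y t) ^ 4
          - 2 * (x t) ^ 2 + 2 * (y t) ^ 2 + 1) := by
  intro t
  have hu : HasDerivAt (fun s => x s ^ 2 - y s ^ 2 - 1) (2 * x t ^ 3 * y t) t :=
    ((((hx t).pow 2).sub ((hy t).pow 2)).sub_const 1).congr_deriv (by ring)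
  have hv : HasDerivAt (fun s => 2 * x s * y s) (2 * y t ^ 2 + 2 * x t ^ 2 - 2 * x t ^ 4) t :=
    (((hx t).const_mul 2).mul (hy t)).congr_deriv (by ring)
  have hangle := polar_angle_deriv_mul_sq_add_sq hu hv (hθ t) (Eventually.of_forall hpolar)
  have hD : (x t) ^ 4 + 2 * (x t) ^ 2 * (y t) ^ 2 + (y t) ^ 4 - 2 * (x t) ^ 2
      + 2 * (y t) ^ 2 + 1 = ρ t ^ 2 := by
    obtain ⟨hcos, hsin⟩ := hpolar t
    linear_combination (x t ^ 2 - y t ^ 2 - 1 + ρ t * cos (θ t)) * hcos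
      + (2 * x t * y t + ρ t * sin (θ t)) * hsin + ρ t ^ 2 * sin_sq_add_cos_sq (θ t)
  rw [eq_div_iff (hD ▸ pow_ne_zero 2 (hρ t).ne')]
  linear_combination hangle
end

section
/- For the dissipative Duffing system with μ > 0, at every point (x,y) with y ≠ 0 and (x²−y², 2xy) ≠ (1,0), the quantity dH/dθ = Ḣ/θ̇ is strictly positive, where Ḣ = −μy² and θ̇ = −2(x⁶ + x⁴y² − 2x⁴ + y⁴ + x² + y²)/(x⁴ + 2x²y² + y⁴ − 2x² + 2y² + 1). -/
/-- For the dissipative Duffing system with `μ > 0`, at every point with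
`y ≠ 0` and `(x²−y², 2xy) ≠ (1,0)`, the quantity `dH/dθ = Ḣ/θ̇` is strictly
positive, where `Ḣ = −μy²` and `θ̇ = −2N/D`. -/
theorem dH_dtheta_positive (μ : ℝ) (hμ : 0 < μ) (x y : ℝ)
    (hy : y ≠ 0)
    (hne : (x ^ 2 - y ^ 2, 2 * x * y) ≠ ((1 : ℝ), (0 : ℝ))) :
    0 < (-μ * y ^ 2) /
      (-2 * (x ^ 6 + x ^ 4 * y ^ 2 - 2 * x ^ 4 + y ^ 4 + x ^ 2 + y ^ 2)
        / (x ^ 4 + 2 * x ^ 2 * y ^ 2 + y ^ 4 - 2 * x ^ 2 + 2 * y ^ 2 + 1)) := by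
  have hy2 : 0 < y ^ 2 := by positivity
  have hN : 0 < x ^ 6 + x ^ 4 * y ^ 2 - 2 * x ^ 4 + y ^ 4 + x ^ 2 + y ^ 2 := by
    nlinarith [sq_nonneg (x * (x ^ 2 - 1)), sq_nonneg (x ^ 2 * y), sq_nonneg (y ^ 2)]
  have hD : 0 < x ^ 4 + 2 * x ^ 2 * y ^ 2 + y ^ 4 - 2 * x ^ 2 + 2 * y ^ 2 + 1 := by
    nlinarith [sq_nonneg (x ^ 2 + y ^ 2 - 1)]
  have hnum : -μ * y ^ 2 < 0 := by nlinarith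
  have hden : -2 * (x ^ 6 + x ^ 4 * y ^ 2 - 2 * x ^ 4 + y ^ 4 + x ^ 2 + y ^ 2)
      / (x ^ 4 + 2 * x ^ 2 * y ^ 2 + y ^ 4 - 2 * x ^ 2 + 2 * y ^ 2 + 1) < 0 := by
    apply div_neg_of_neg_of_pos _ hD
    nlinarith
  exact div_pos_of_neg_of_neg hnum hden
end
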